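/- A simple graph G is the paired coalition graph PCG(P, π) of some path P with respect to some pc-partition π of P if and only if G is isomorphic to P_2 or to P_3. -/

import Mathlib

namespace PCPaper

variable {V : Type*}

/-- `S` is a dominating set of `G`. -/
def IsDomSet (G : SimpleGraph V) (S : Set V) : Prop :=
  ∀ v : V, v ∈ S ∨ ∃ u ∈ S, G.Adj u v

/-- `S` is a paired dominating set of `G`: a dominating set such that the subgraph of `G`
induced by `S` contains a perfect matching (a matching whose vertex set is exactly `S`). -/
def IsPairedDomSet (G : SimpleGraph V) (S : Set V) : Prop :=
  IsDomSet G S ∧ ∃ M : G.Subgraph, M.verts = S ∧ M.IsMatching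

/-- Disjoint sets `A`, `B`, neither a paired dominating set, whose union is one. -/
def PairedCoalition (G : SimpleGraph V) (A B : Set V) : Prop :=
  Disjoint A B ∧ ¬ IsPairedDomSet G A ∧ ¬ IsPairedDomSet G B ∧ IsPairedDomSet G (A ∪ B)

variable [Fintype V] [DecidableEq V]

/-- `π` is a paired coalition partition of `G`: no part is a paired dominating set and every
part forms a paired coalition with some other part. -/
def IsPCPartition (G : SimpleGraph V) (π : Finpartition (Finset.univ : Finset V)) : Prop :=
  ∀ A ∈ π.parts, ¬ IsPairedDomSet G (A : Set V) ∧
    ∃ B ∈ π.parts, B ≠ A ∧ PairedCoalition G (A : Set V) (B : Set V)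

/-- The paired coalition number: the maximum number of parts of a pc-partition of `G`,
and `0` if `G` admits no pc-partition. -/
noncomputable def pcNumber (G : SimpleGraph V) : ℕ :=
  sSup {k | ∃ π : Finpartition (Finset.univ : Finset V), IsPCPartition G π ∧ π.parts.card = k}

/-- The paired coalition graph of a partition `π` of `G`: vertices are the parts of `π`,
two parts being adjacent iff they form a paired coalition in `G`. -/
def PCG (G : SimpleGraph V) (π : Finpartition (Finset.univ : Finset V)) :
    SimpleGraph {A : Finset V // A ∈ π.parts} where
  Adj A B := PairedCoalition G ((A : Finset V) : Set V) ((B : Finset V) : Set V)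
  symm := by
    constructor
    rintro A B ⟨h1, h2, h3, h4⟩
    exact ⟨h1.symm, h3, h2, by rwa [Set.union_comm]⟩
  loopless := by
    constructor
    rintro A ⟨h1, h2, h3, h4⟩
    exact h2 (by rwa [Set.union_self] at h4)

end PCPaper

/-!
Every paired dominating set `S` is total: each vertex has a neighbour in `S` (for a vertex of
`S`, its partner in the matching). On a path, vertex `0` has the single neighbour `1`, so every
paired dominating set contains vertex `1`, and every edge of the paired coalition graph meets the
part `c` containing vertex `1`. Since no part is isolated, the graph is a star centred at `c`.

A part `C` has at most two pairwise disjoint coalition partners, since there are two positions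
each partner must occupy. If `C` fails to dominate a vertex `v`, each partner contains a
neighbour of `v`. If `C` dominates, it has no perfect matching, hence a maximal run of odd
length; a perfect matching of `C ∪ A` cannot stay inside an odd run, so `A` contains one of
the two vertices flanking it.

A star with one or two leaves is `P₂` or `P₃`, and the partitions of `P₂` and `P₃` into
singletons realise both.
-/

namespace PCPaper

open SimpleGraph

section General

variable {V : Type*} {G : SimpleGraph V}

theorem _root_.SimpleGraph.Subgraph.IsMatching.even_ncard_of_forall_adj_mem {M : G.Subgraph}
    (hM : M.IsMatching) {T : Set V} (hT : T.Finite) (hTM : T ⊆ M.verts)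
    (hclosed : ∀ v ∈ T, ∀ w, M.Adj v w → w ∈ T) : Even T.ncard := by
  have hMT : (M.induce T).IsMatching := by
    intro v hv
    obtain ⟨w, hvw, huniq⟩ := hM (hTM hv)
    exact ⟨w, ⟨hv, hclosed v hv w hvw, hvw⟩, fun y hy => huniq y hy.2.2⟩
  have := (show (M.induce T).verts.Finite from hT).fintype
  change Even (M.induce T).verts.ncard
  rw [Set.ncard_eq_toFinset_card']
  exact hMT.even_card

theorem IsPairedDomSet.exists_adj_mem {S : Set V} (hS : IsPairedDomSet G S) (v : V) :
    ∃ u ∈ S, G.Adj u v := by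
  obtain ⟨hdom, M, rfl, hM⟩ := hS
  rcases hdom v with hv | hv
  · obtain ⟨w, hvw, -⟩ := hM hv
    exact ⟨w, M.edge_vert hvw.symm, (M.adj_sub hvw).symm⟩
  · exact hv

theorem not_isPairedDomSet_singleton (v : V) : ¬ IsPairedDomSet G {v} := fun hS => by
  obtain ⟨u, rfl, hvv⟩ := hS.exists_adj_mem v
  exact hvv.ne rfl

theorem isPairedDomSet_pair {a b : V} (hab : G.Adj a b) (hdom : IsDomSet G {a, b}) :
    IsPairedDomSet G {a, b} :=
  ⟨hdom, G.subgraphOfAdj hab, subgraphOfAdj_verts G hab, .subgraphOfAdj hab⟩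

end General

section Path

variable {n : ℕ}

theorem IsPairedDomSet.exists_val_eq_one_mem {S : Set (Fin n)}
    (hS : IsPairedDomSet (pathGraph n) S) (hn : 0 < n) : ∃ u ∈ S, u.val = 1 := by
  obtain ⟨u, hu, hadj⟩ := hS.exists_adj_mem ⟨0, hn⟩
  exact ⟨u, hu, by rw [pathGraph_adj] at hadj; simp at hadj; omega⟩

section Count

open scoped Classical

theorem exists_isMatching_of_even_count {C : Set (Fin n)}
    (h : ∀ k ∉ Fin.val '' C, Even (Nat.count (· ∈ Fin.val '' C) k)) :
    ∃ M : (pathGraph n).Subgraph, M.verts = C ∧ M.IsMatching := by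
  set T := Fin.val '' C
  set N := Nat.count (· ∈ T)
  have hmem (v : Fin n) : v.val ∈ T ↔ v ∈ C := Fin.val_injective.mem_set_image
  have hsucc (m : ℕ) : N (m + 1) = N m + if m ∈ T then 1 else 0 := Nat.count_succ _ _
  -- `v ∈ C` is matched upwards iff an even number of vertices of `C` lie below it
  refine ⟨{ verts := C
            Adj := fun u w => u ∈ C ∧ w ∈ C ∧
              (u.val + 1 = w.val ∧ Even (N u.val) ∨ w.val + 1 = u.val ∧ Even (N w.val))
            adj_sub := fun h => pathGraph_adj.mpr (h.2.2.imp And.left And.left)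
            edge_vert := fun h => h.1
            symm := ⟨fun _ _ ⟨hu, hw, h⟩ => ⟨hw, hu, h.symm⟩⟩ }, rfl, ?_⟩
  intro v hv
  by_cases he : Even (N v.val)
  · have hup : v.val + 1 ∈ T := by
      by_contra hup
      have := h _ hup
      rw [hsucc, if_pos ((hmem v).2 hv), Nat.even_add_one] at this
      exact this he
    obtain ⟨w, hw, hwv⟩ := hup
    refine ⟨w, ⟨hv, hw, .inl ⟨hwv.symm, he⟩⟩, ?_⟩
    rintro y ⟨-, hy, ⟨hvy, -⟩ | ⟨hyv, hey⟩⟩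
    · exact Fin.ext (by omega)
    · rw [← hyv, hsucc, if_pos ((hmem y).2 hy), Nat.even_add_one] at he
      exact absurd hey he
  · obtain ⟨m, hm⟩ : ∃ m, v.val = m + 1 :=
      Nat.exists_eq_succ_of_ne_zero fun h0 => he (by simp [h0, N])
    have hdown : m ∈ T := by
      by_contra hdown
      rw [hm, hsucc, if_neg hdown, add_zero] at he
      exact he (h m hdown)
    rw [hm, hsucc, if_pos hdown, Nat.even_add_one, not_not] at he
    obtain ⟨w, hw, hwm⟩ := hdown
    refine ⟨w, ⟨hv, hw, .inr ⟨by omega, hwm ▸ he⟩⟩, ?_⟩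
    rintro y ⟨-, -, ⟨hvy, hev⟩ | ⟨hyv, -⟩⟩
    · rw [hm, hsucc, if_pos (hwm ▸ (hmem w).2 hw), Nat.even_add_one] at hev
      exact absurd he hev
    · exact Fin.ext (by omega)

theorem exists_odd_run {C : Set (Fin n)}
    (hC : ¬ ∃ M : (pathGraph n).Subgraph, M.verts = C ∧ M.IsMatching) :
    ∃ a b : ℕ, Odd (b - a) ∧ b ≤ n ∧ (∀ v : Fin n, a ≤ v.val → v.val < b → v ∈ C) ∧
      ∀ v ∈ C, v.val ≠ b ∧ v.val + 1 ≠ a := by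
  set T := Fin.val '' C
  set N := Nat.count (· ∈ T)
  have hmem (v : Fin n) : v.val ∈ T ↔ v ∈ C := Fin.val_injective.mem_set_image
  have hsucc (m : ℕ) : N (m + 1) = N m + if m ∈ T then 1 else 0 := Nat.count_succ _ _
  have hbad : ∃ b, b ∉ T ∧ Odd (N b) := by
    by_contra! h
    exact hC (exists_isMatching_of_even_count fun k hk => Nat.not_odd_iff_even.mp (h k hk))
  -- `b` is the first position outside `C` preceded by an odd number of vertices of `C`,
  -- and `[a, b)` is the run of `C` ending there
  set b := Nat.find hbad
  obtain ⟨hbT, hbodd⟩ : b ∉ T ∧ Odd (N b) := Nat.find_spec hbad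
  have hrun : ∃ a, ∀ m, a ≤ m → m < b → m ∈ T := ⟨b, fun m h1 h2 => absurd h2 (by omega)⟩
  set a := Nat.find hrun
  have hab : ∀ m, a ≤ m → m < b → m ∈ T := Nat.find_spec hrun
  have hbot : ∀ m, m + 1 = a → m ∉ T := fun m hm hmT =>
    Nat.find_min hrun (show m < a by omega) fun j hj hjb =>
      if hjm : j = m then hjm ▸ hmT else hab j (by omega) hjb
  have hle : a ≤ b := Nat.find_min' hrun fun m h1 h2 => absurd h2 (by omega)
  have hNa : Even (N a) := by
    rcases Nat.eq_zero_or_pos a with h0 | hpos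
    · simp [h0, N]
    · have hgap := hbot (a - 1) (by omega)
      have hNgap : Even (N (a - 1)) :=
        Nat.not_odd_iff_even.mp fun hodd => Nat.find_min hbad (show a - 1 < b by omega) ⟨hgap, hodd⟩
      rwa [show a = a - 1 + 1 by omega, hsucc, if_neg hgap, add_zero]
  have hNb : N b = N a + (b - a) := by
    have hcount : Nat.count (fun k => a + k ∈ T) (b - a) = b - a :=
      Nat.count_of_forall fun j hj => hab _ (by omega) (by omega)
    rw [← hcount, ← Nat.count_add, Nat.add_sub_cancel' hle]
  have hodd : Odd (b - a) := by
    rw [hNb] at hbodd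
    exact (Nat.odd_add'.mp hbodd).mpr hNa
  refine ⟨a, b, hodd, ?_, fun v h1 h2 => (hmem v).1 (hab _ h1 h2),
    fun v hv => ⟨fun h => hbT (h ▸ (hmem v).2 hv), fun h => hbot _ h ((hmem v).2 hv)⟩⟩
  have hlt : a < b := Nat.lt_of_sub_pos hodd.pos
  obtain ⟨w, -, hw⟩ := hab (b - 1) (by omega) (by omega)
  omega

end Count

theorem _root_.SimpleGraph.Subgraph.IsMatching.exists_mem_flank_of_odd_interval
    {M : (pathGraph n).Subgraph} (hM : M.IsMatching) {a b : ℕ} (hodd : Odd (b - a)) (hb : b ≤ n)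
    (hrun : ∀ v : Fin n, a ≤ v.val → v.val < b → v ∈ M.verts) :
    ∃ w ∈ M.verts, w.val = b ∨ w.val + 1 = a := by
  by_contra! hflank
  set I : Set (Fin n) := Fin.val ⁻¹' Set.Ico a b
  have hI : Even I.ncard := by
    refine hM.even_ncard_of_forall_adj_mem I.toFinite (fun v hv => hrun v hv.1 hv.2) ?_
    intro v hv w hvw
    have hadj := pathGraph_adj.mp (M.adj_sub hvw)
    have := hflank w (M.edge_vert hvw.symm)
    simp only [I, Set.mem_preimage, Set.mem_Ico] at hv ⊢
    omega
  rw [Set.ncard_preimage_of_injective_subset_range Fin.val_injective (by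
    intro m hm; exact ⟨⟨m, by simp at hm; omega⟩, rfl⟩), Set.ncard_Ico_nat] at hI
  exact Nat.not_even_iff_odd.mpr hodd hI

theorem exists_hitting_pair {C : Set (Fin n)} (hC : ¬ IsPairedDomSet (pathGraph n) C) :
    ∃ x y : ℕ, ∀ A, IsPairedDomSet (pathGraph n) (C ∪ A) → ∃ w ∈ A, w.val = x ∨ w.val + 1 = y := by
  by_cases hdom : IsDomSet (pathGraph n) C
  · obtain ⟨a, b, hodd, hb, hrun, hflank⟩ := exists_odd_run fun hM => hC ⟨hdom, hM⟩
    refine ⟨b, a, fun A ⟨_, M, hverts, hM⟩ => ?_⟩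
    obtain ⟨w, hw, hwab⟩ := hM.exists_mem_flank_of_odd_interval hodd hb
      fun v h1 h2 => hverts ▸ Or.inl (hrun v h1 h2)
    rw [hverts] at hw
    refine ⟨w, hw.resolve_left fun hwC => ?_, hwab⟩
    exact hwab.elim (hflank w hwC).1 (hflank w hwC).2
  · simp only [IsDomSet, not_forall, not_or, not_exists, not_and] at hdom
    obtain ⟨v, hvC, hv⟩ := hdom
    refine ⟨v.val + 1, v.val, fun A hA => ?_⟩
    obtain ⟨w, hw, hwv⟩ := hA.exists_adj_mem v
    refine ⟨w, hw.resolve_left fun hwC => hv w hwC hwv, ?_⟩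
    have := pathGraph_adj.mp hwv
    omega

theorem not_pairwise_disjoint_of_isPairedDomSet_union {C A B D : Set (Fin n)}
    (hC : ¬ IsPairedDomSet (pathGraph n) C) (hA : IsPairedDomSet (pathGraph n) (C ∪ A))
    (hB : IsPairedDomSet (pathGraph n) (C ∪ B)) (hD : IsPairedDomSet (pathGraph n) (C ∪ D)) :
    ¬ (Disjoint A B ∧ Disjoint A D ∧ Disjoint B D) := by
  rintro ⟨hAB, hAD, hBD⟩
  obtain ⟨x, y, hxy⟩ := exists_hitting_pair hC
  obtain ⟨a, ha, hxya⟩ := hxy A hA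
  obtain ⟨b, hb, hxyb⟩ := hxy B hB
  obtain ⟨d, hd, hxyd⟩ := hxy D hD
  have : a = b ∨ a = d ∨ b = d := by simp only [Fin.ext_iff]; omega
  rcases this with rfl | rfl | rfl
  exacts [Set.disjoint_left.mp hAB ha hb, Set.disjoint_left.mp hAD ha hd,
    Set.disjoint_left.mp hBD hb hd]

end Path

section Star

variable {α : Type*} (H : SimpleGraph α)

theorem nonempty_iso_pathGraph_two {a b : α} (hab : H.Adj a b) (hall : ∀ x, x = a ∨ x = b) :
    Nonempty (H ≃g pathGraph 2) := by
  have hbij : Function.Bijective ![a, b] := by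
    refine ⟨fun i j hij => ?_, fun x => ?_⟩
    · fin_cases i <;> fin_cases j <;> simp_all [hab.ne, hab.ne.symm]
    · rcases hall x with rfl | rfl
      exacts [⟨0, rfl⟩, ⟨1, rfl⟩]
  refine ⟨(RelIso.mk (Equiv.ofBijective _ hbij) fun {i j} => ?_).symm⟩
  fin_cases i <;> fin_cases j <;> simp [pathGraph_adj, hab, hab.symm]

theorem nonempty_iso_pathGraph_three {a b c : α} (hab : H.Adj a b) (hbc : H.Adj b c)
    (hnac : ¬ H.Adj a c) (hac : a ≠ c) (hall : ∀ x, x = a ∨ x = b ∨ x = c) :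
    Nonempty (H ≃g pathGraph 3) := by
  have hbij : Function.Bijective ![a, b, c] := by
    refine ⟨fun i j hij => ?_, fun x => ?_⟩
    · fin_cases i <;> fin_cases j <;> simp_all [hab.ne, hab.ne.symm, hbc.ne, hbc.ne.symm]
    · rcases hall x with rfl | rfl | rfl
      exacts [⟨0, rfl⟩, ⟨1, rfl⟩, ⟨2, rfl⟩]
  refine ⟨(RelIso.mk (Equiv.ofBijective _ hbij) fun {i j} => ?_).symm⟩
  have hnca : ¬ H.Adj c a := fun h => hnac h.symm
  fin_cases i <;> fin_cases j <;> simp [pathGraph_adj, hab, hab.symm, hbc, hbc.symm, hnac, hnca]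

theorem nonempty_iso_pathGraph_two_or_three_of_star (c : α)
    (hc : ∀ x y, H.Adj x y → x = c ∨ y = c) (hex : ∀ x, ∃ y, H.Adj x y)
    (hdeg : ∀ x y z, H.Adj c x → H.Adj c y → H.Adj c z → x = y ∨ x = z ∨ y = z) :
    Nonempty (H ≃g pathGraph 2) ∨ Nonempty (H ≃g pathGraph 3) := by
  have hleaf (x : α) (hx : x ≠ c) : H.Adj c x := by
    obtain ⟨y, hxy⟩ := hex x
    obtain rfl := (hc x y hxy).resolve_left hx
    exact hxy.symm
  obtain ⟨a, hca⟩ := hex c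
  by_cases h2 : ∀ x, x = c ∨ x = a
  · exact .inl (nonempty_iso_pathGraph_two H hca h2)
  obtain ⟨b, hbc, hba⟩ : ∃ b, b ≠ c ∧ b ≠ a := by simpa only [not_forall, not_or] using h2
  refine .inr (nonempty_iso_pathGraph_three H hca.symm (hleaf b hbc) (fun hab => ?_) hba.symm
    fun x => ?_)
  · rcases hc a b hab with h | h
    exacts [hca.ne h.symm, hbc h]
  · by_cases hx : x = c
    · exact .inr (.inl hx)
    rcases hdeg a b x hca (hleaf b hbc) (hleaf x hx) with h | h | h
    exacts [absurd h hba.symm, .inl h.symm, .inr (.inr h.symm)]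

end Star

section Coalition

variable {V : Type*} [Fintype V] [DecidableEq V] {G : SimpleGraph V}
  {π : Finpartition (Finset.univ : Finset V)}

theorem disjoint_of_ne_parts {X Y : {A : Finset V // A ∈ π.parts}} (h : X ≠ Y) :
    Disjoint ((X : Finset V) : Set V) ((Y : Finset V) : Set V) :=
  Finset.disjoint_coe.mpr (π.disjoint X.2 Y.2 (Subtype.coe_ne_coe.mpr h))

theorem isPCPartition_bot (h : ∀ a, ∃ b, G.Adj a b ∧ IsDomSet G {a, b}) :
    IsPCPartition G (⊥ : Finpartition (Finset.univ : Finset V)) := by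
  intro A hA
  obtain ⟨a, -, rfl⟩ := Finpartition.mem_bot_iff.mp hA
  obtain ⟨b, hab, hdom⟩ := h a
  refine ⟨by simpa using not_isPairedDomSet_singleton a,
    {b}, Finpartition.mem_bot_iff.mpr ⟨b, Finset.mem_univ b, rfl⟩, by simpa using hab.ne.symm,
    by simpa using hab.ne, by simpa using not_isPairedDomSet_singleton a,
    by simpa using not_isPairedDomSet_singleton b, ?_⟩
  simpa [Set.singleton_union, Set.pair_comm] using isPairedDomSet_pair hab hdom

theorem pcg_pathGraph_nonempty_iso {n : ℕ} (hn : 1 ≤ n)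
    {π : Finpartition (Finset.univ : Finset (Fin n))} (hπ : IsPCPartition (pathGraph n) π) :
    Nonempty (PCG (pathGraph n) π ≃g pathGraph 2) ∨
      Nonempty (PCG (pathGraph n) π ≃g pathGraph 3) := by
  have hpartner (X : {A // A ∈ π.parts}) : ∃ Y, (PCG (pathGraph n) π).Adj X Y :=
    let ⟨_, B, hB, _, hXB⟩ := hπ X X.2
    ⟨⟨B, hB⟩, hXB⟩
  obtain ⟨Y, hY⟩ := hpartner ⟨π.part ⟨0, hn⟩, π.part_mem.mpr (Finset.mem_univ _)⟩
  obtain ⟨u, -, hu⟩ := hY.2.2.2.exists_val_eq_one_mem hn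
  have hmem_u {S : Set (Fin n)} (hS : IsPairedDomSet (pathGraph n) S) : u ∈ S := by
    obtain ⟨w, hw, hw1⟩ := hS.exists_val_eq_one_mem hn
    rwa [Fin.ext (hw1.trans hu.symm)] at hw
  let c : {A // A ∈ π.parts} := ⟨π.part u, π.part_mem.mpr (Finset.mem_univ u)⟩
  have hc (X : {A // A ∈ π.parts}) (hX : u ∈ (X : Finset (Fin n))) : X = c :=
    Subtype.ext (π.part_eq_of_mem X.2 hX).symm
  refine nonempty_iso_pathGraph_two_or_three_of_star _ c
    (fun X Y hXY => (hmem_u hXY.2.2.2).imp (hc X) (hc Y)) hpartner ?_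
  intro X Y Z hX hY hZ
  by_contra! h
  exact not_pairwise_disjoint_of_isPairedDomSet_union hX.2.1 hX.2.2.2 hY.2.2.2 hZ.2.2.2
    ⟨disjoint_of_ne_parts h.1, disjoint_of_ne_parts h.2.1, disjoint_of_ne_parts h.2.2⟩

theorem exists_pcg_pathGraph_iso_self {k : ℕ} (hk : k = 2 ∨ k = 3) :
    ∃ π : Finpartition (Finset.univ : Finset (Fin k)), IsPCPartition (pathGraph k) π ∧
      Nonempty (PCG (pathGraph k) π ≃g pathGraph k) := by
  have hπ : IsPCPartition (pathGraph k) ⊥ := by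
    apply isPCPartition_bot
    rcases hk with rfl | rfl <;> intro a <;>
      refine ⟨if a = 1 then 0 else 1, ?_, fun v => ?_⟩ <;> fin_cases a <;> try fin_cases v
    all_goals simp [pathGraph_adj]
  refine ⟨⊥, hπ, ?_⟩
  have hcard {m : ℕ} (e : PCG (pathGraph k) ⊥ ≃g pathGraph m) : k = m := by
    rw [← Fintype.card_fin m, ← Fintype.card_congr e.toEquiv, Fintype.card_coe,
      Finpartition.card_bot, Finset.card_univ, Fintype.card_fin]
  rcases pcg_pathGraph_nonempty_iso (by omega) hπ with h | h <;>
  · obtain ⟨e⟩ := h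
    obtain rfl := hcard e
    exact ⟨e⟩

end Coalition

end PCPaper

open PCPaper in
theorem stmt_7_general {W : Type*} (G : SimpleGraph W) :
    (∃ (n : ℕ), 1 ≤ n ∧ ∃ π : Finpartition (Finset.univ : Finset (Fin n)),
        IsPCPartition (SimpleGraph.pathGraph n) π ∧
        Nonempty (G ≃g PCG (SimpleGraph.pathGraph n) π)) ↔
    (Nonempty (G ≃g SimpleGraph.pathGraph 2) ∨ Nonempty (G ≃g SimpleGraph.pathGraph 3)) := by
  constructor
  · rintro ⟨n, hn, π, hπ, ⟨e⟩⟩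
    exact (pcg_pathGraph_nonempty_iso hn hπ).imp (fun ⟨i⟩ => ⟨e.trans i⟩) fun ⟨i⟩ => ⟨e.trans i⟩
  · have realize {k : ℕ} (hk : k = 2 ∨ k = 3) (e : G ≃g SimpleGraph.pathGraph k) :
        ∃ (n : ℕ), 1 ≤ n ∧ ∃ π : Finpartition (Finset.univ : Finset (Fin n)),
          IsPCPartition (SimpleGraph.pathGraph n) π ∧
          Nonempty (G ≃g PCG (SimpleGraph.pathGraph n) π) := by
      obtain ⟨π, hπ, ⟨i⟩⟩ := exists_pcg_pathGraph_iso_self hk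
      exact ⟨k, by omega, π, hπ, ⟨e.trans i.symm⟩⟩
    rintro (h | h)
    exacts [realize (.inl rfl) h.some, realize (.inr rfl) h.some]

open PCPaper in
/-- A graph is the paired coalition graph of some path with respect to some pc-partition
iff it is isomorphic to `P_2` or `P_3`. -/
theorem stmt_7 {W : Type*} [Fintype W] (G : SimpleGraph W) :
    (∃ (n : ℕ), 1 ≤ n ∧ ∃ π : Finpartition (Finset.univ : Finset (Fin n)),
        IsPCPartition (SimpleGraph.pathGraph n) π ∧
        Nonempty (G ≃g PCG (SimpleGraph.pathGraph n) π)) ↔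
    (Nonempty (G ≃g SimpleGraph.pathGraph 2) ∨ Nonempty (G ≃g SimpleGraph.pathGraph 3)) :=
  stmt_7_general G
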